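/- Let F be a field of characteristic p > 0 and (b_1,m_1),…,(b_r,m_r) ∈ F^* × ℕ_{>0}. Then: (i) K_F((b_1,m_1),…,(b_r,m_r)) = K_F((b_{σ(1)},m_{σ(1)}),…,(b_{σ(r)},m_{σ(r)})) for every permutation σ of {1,…,r}; (ii) for every i ∈ {1,…,r}, K_F((b_1,m_1),…,(b_i^p, m_i+1),…,(b_r,m_r)) = K_F((b_1,m_1),…,(b_r,m_r)). -/

import Mathlib

noncomputable section

/-- The full algebra of absolute differential forms of a field `F`:
the exterior algebra of the `F`-module of absolute Kähler differentials `Ω[F⁄ℤ]`. -/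
abbrev DF (F : Type*) [Field F] : Type _ :=
  ExteriorAlgebra F (KaehlerDifferential ℤ F)

/-- `Ω_F^n`, the space of differential `n`-forms, as a submodule of `DF F`. -/
def omegaPow (F : Type*) [Field F] (n : ℕ) : Submodule F (DF F) :=
  LinearMap.range (ExteriorAlgebra.ι F :
    KaehlerDifferential ℤ F →ₗ[F] DF F) ^ n

/-- `Ω_F^{n-1}`, with the convention `Ω_F^{-1} = 0`. -/
def omegaPred (F : Type*) [Field F] : ℕ → Submodule F (DF F)
  | 0 => ⊥
  | n + 1 => omegaPow F n

/-- The exact 1-form `d a` of an element `a ∈ F`. -/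
def dForm (F : Type*) [Field F] (a : F) : DF F :=
  ExteriorAlgebra.ι F (KaehlerDifferential.D ℤ F a)

/-- The logarithmic 1-form `da/a` of an element `a ∈ F`. -/
def dLog (F : Type*) [Field F] (a : F) : DF F :=
  ExteriorAlgebra.ι F (a⁻¹ • KaehlerDifferential.D ℤ F a)

/-- The logarithmic `n`-form `(dx₁/x₁) ∧ … ∧ (dxₙ/xₙ)`. -/
def logForm (F : Type*) [Field F] {n : ℕ} (x : Fin n → F) : DF F :=
  (List.ofFn fun i => dLog F (x i)).prod

/-- The exterior derivative `d` together with the (`p`-basis dependent) additive map `s_p`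
on the differential forms of a field `F` of characteristic `p`. -/
structure DiffStr (p : ℕ) (F : Type*) [Field F] where
  d : DF F →+ DF F
  sp : DF F →+ DF F
  d_grade : ∀ n : ℕ, ∀ ω ∈ omegaPow F n, d ω ∈ omegaPow F (n + 1)
  d_d : ∀ ω : DF F, d (d ω) = 0
  d_one : d 1 = 0
  d_smul : ∀ (a : F) (ω : DF F), d (a • ω) = dForm F a * ω + a • d ω
  sp_grade : ∀ n : ℕ, ∀ ω ∈ omegaPow F n, sp ω ∈ omegaPow F n
  sp_log : ∀ (n : ℕ) (a : F) (x : Fin n → F),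
      ∃ η ∈ omegaPred F n, sp (a • logForm F x) = a ^ p • logForm F x + d η

/-- The Artin–Schreier map `℘ = s_p − id` on differential forms. -/
def asMap {p : ℕ} {F : Type*} [Field F] (S : DiffStr p F) : DF F →+ DF F :=
  S.sp - AddMonoidHom.id (DF F)

/-- The subgroup `℘Ω_F^n + dΩ_F^{n-1}` of `Ω_F^n`; the group `H_p^{n+1}(F)` is the quotient
of `Ω_F^n` by this subgroup. -/
def hRel {p : ℕ} {F : Type*} [Field F] (S : DiffStr p F) (n : ℕ) : AddSubgroup (DF F) :=
  ((omegaPow F n).toAddSubgroup.map (asMap S)) ⊔ ((omegaPred F n).toAddSubgroup.map S.d)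

/-- The `t`-th iterate `v ↦ v^{[p^t]}` of the map `s_p`. -/
def spIter {p : ℕ} {F : Type*} [Field F] (S : DiffStr p F) (t : ℕ) : DF F → DF F :=
  (fun x => S.sp x)^[t]

/-- `ν_n(F) = ker(℘ : Ω_F^n → Ω_F^n/dΩ_F^{n-1})`. -/
def nuSet {p : ℕ} {F : Type*} [Field F] (S : DiffStr p F) (n : ℕ) : Set (DF F) :=
  { η | η ∈ omegaPow F n ∧ ∃ z ∈ omegaPred F n, S.sp η - η = S.d z }

/-- Restriction of differential forms along a field extension `E/F`. -/
structure DiffRes (p : ℕ) (F E : Type*) [Field F] [Field E] [Algebra F E]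
    (SF : DiffStr p F) (SE : DiffStr p E) where
  res : DF F →+ DF E
  res_one : res 1 = 1
  res_mul : ∀ x y : DF F, res (x * y) = res x * res y
  res_smul : ∀ (a : F) (ω : DF F), res (a • ω) = algebraMap F E a • res ω
  res_dForm : ∀ a : F, res (dForm F a) = dForm E (algebraMap F E a)
  res_grade : ∀ n : ℕ, ∀ ω ∈ omegaPow F n, res ω ∈ omegaPow E n
  res_d : ∀ ω : DF F, res (SF.d ω) = SE.d (res ω)

/-- The generators of the group `K_F((b₁,m₁),…,(b_r,m_r)) ⊆ H_p^{n+1}(F)`: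
(i) the forms `bᵢ·dz` with `z ∈ Ω_F^{n-1}`, and
(ii) the forms `b₁^{k(t,1)}⋯b_r^{k(t,r)}·(dv)^{[p^t]}` with `v ∈ Ω_F^{n-1}`,
`t = 1,…,max(m)−1`, `0 ≤ k(t,i) < p^t` and `max{1, p^{t−mᵢ+1}} ∣ k(t,i)`. -/
def kGens {p : ℕ} {F : Type*} [Field F] (S : DiffStr p F) {r : ℕ}
    (b : Fin r → F) (m : Fin r → ℕ) (n : ℕ) : Set (DF F) :=
  { x | ∃ i : Fin r, ∃ z ∈ omegaPred F n, x = b i • S.d z } ∪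
  { x | ∃ (t : ℕ) (k : Fin r → ℕ), 0 < t ∧ t < Finset.univ.sup m ∧
      (∀ i, k i < p ^ t ∧ p ^ (t + 1 - m i) ∣ k i) ∧
      ∃ v ∈ omegaPred F n, x = (∏ i, b i ^ k i) • spIter S t (S.d v) }

/-- The preimage in `Ω_F^n` of the subgroup `K_F((b₁,m₁),…,(b_r,m_r))` of `H_p^{n+1}(F)`:
the subgroup generated by `℘Ω_F^n + dΩ_F^{n-1}` together with the generators above.
Two subgroups of `H_p^{n+1}(F)` agree iff their preimages agree. -/
def kGroup {p : ℕ} {F : Type*} [Field F] (S : DiffStr p F) {r : ℕ}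
    (b : Fin r → F) (m : Fin r → ℕ) (n : ℕ) : AddSubgroup (DF F) :=
  AddSubgroup.closure ((hRel S n : Set (DF F)) ∪ kGens S b m n)

/-!
Every generator of `K_F` is a form `b^e (dv)^{[p^t]}` with `p^{t+1-mᵢ} ∣ eᵢ`, and conversely every
such form lies in `K_F`, without the bounds `t < max m` and `eᵢ < p^t`. This is proved by
induction on `t`. For `t ≥ max m` all `eᵢ` are divisible by `p`, and `c^p s_p(ω) ≡ c ω` modulo
`℘Ω_F^n + dΩ_F^{n-1}` lowers `t`. For `t < max m` write `b^e = b^l Q^{p^t}` with `lᵢ < p^t` and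
move `Q^{p^t}` inside `s_p^t`: modulo exact forms `s_p` is `p`-semilinear and commutes with
`dQ/Q ∧ -`, and the iterated errors `(dη)^{[p^u]}`, `u < t`, are covered by induction.

Hence `K_F` is generated by `℘Ω_F^n + dΩ_F^{n-1}` and all these forms. The congruence
`c ω ≡ c^p s_p(ω)` moves such a form for `(bᵢ, mᵢ)` to one for `(bᵢ^p, mᵢ + 1)` at level `t + 1`,
while `bᵢ^{p k}` with `k` admissible for `mᵢ + 1` is admissible for `mᵢ`; so both descriptions of
`K_F` agree. Invariance under permutations is immediate from the definition.
-/

section Forms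

variable {F : Type*} [Field F]

theorem dLog_mul_logForm {n : ℕ} (c : F) (x : Fin n → F) :
    dLog F c * logForm F x = logForm F (Fin.cons c x) := by
  simp [logForm, List.ofFn_succ]

theorem dForm_eq_smul_dLog {c : F} (hc : c ≠ 0) : dForm F c = c • dLog F c := by
  rw [dLog, map_smul, smul_smul, mul_inv_cancel₀ hc, one_smul, dForm]

theorem dForm_pow_eq_zero {p : ℕ} [CharP F p] (a : F) : dForm F (a ^ p) = 0 := by
  rw [dForm, Derivation.leibniz_pow, ← Nat.cast_smul_eq_nsmul F, CharP.cast_eq_zero, zero_smul,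
    map_zero]

theorem dForm_mul_dForm_inv (c : F) : dForm F c * dForm F c⁻¹ = 0 := by
  rw [dForm, dForm, Derivation.leibniz_inv, map_smul, mul_smul_comm, ExteriorAlgebra.ι_sq_zero,
    smul_zero]

theorem logForm_mem_omegaPow {n : ℕ} (x : Fin n → F) : logForm F x ∈ omegaPow F n := by
  induction n with
  | zero => simp [logForm, omegaPow]
  | succ n ih =>
    rw [← Fin.cons_self_tail x, ← dLog_mul_logForm, omegaPow, pow_succ']
    exact Submodule.mul_mem_mul ⟨_, rfl⟩ (ih _)

theorem range_ι_le_span_dLog :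
    LinearMap.range (ExteriorAlgebra.ι F : KaehlerDifferential ℤ F →ₗ[F] DF F) ≤
      Submodule.span F (Set.range (dLog F)) := by
  rw [LinearMap.range_eq_map, ← KaehlerDifferential.span_range_derivation, Submodule.map_span,
    Submodule.span_le, ← Set.range_comp]
  rintro - ⟨a, rfl⟩
  rcases eq_or_ne a 0 with rfl | ha
  · simp
  · change dForm F a ∈ _
    rw [dForm_eq_smul_dLog ha]
    exact Submodule.smul_mem _ a (Submodule.subset_span ⟨a, rfl⟩)

theorem omegaPow_eq_span_logForm (n : ℕ) :
    omegaPow F n = Submodule.span F (Set.range (logForm F (n := n))) := by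
  refine le_antisymm ?_ (Submodule.span_le.2 <| Set.range_subset_iff.2 logForm_mem_omegaPow)
  induction n with
  | zero =>
    rw [omegaPow, pow_zero, Submodule.one_le]
    exact Submodule.subset_span ⟨Fin.elim0, by simp [logForm]⟩
  | succ n ih =>
    rw [omegaPow, pow_succ']
    refine (mul_le_mul' range_ι_le_span_dLog ih).trans ?_
    rw [Submodule.span_mul_span]
    refine Submodule.span_mono ?_
    rintro - ⟨-, ⟨c, rfl⟩, -, ⟨x, rfl⟩, rfl⟩
    exact ⟨Fin.cons c x, (dLog_mul_logForm c x).symm⟩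

@[elab_as_elim]
theorem omegaPow_induction {n : ℕ} {motive : DF F → Prop} (zero : motive 0)
    (add : ∀ ω ω', motive ω → motive ω' → motive (ω + ω'))
    (smul_logForm : ∀ (a : F) (x : Fin n → F), motive (a • logForm F x))
    {ω : DF F} (hω : ω ∈ omegaPow F n) : motive ω := by
  rw [omegaPow_eq_span_logForm] at hω
  induction hω using Submodule.closure_induction with
  | zero => exact zero
  | add _ _ _ _ h h' => exact add _ _ h h'
  | smul_mem a _ hx => obtain ⟨x, rfl⟩ := hx; exact smul_logForm a x

theorem dLog_mul_mem_omegaPow {n : ℕ} (c : F) {ω : DF F} (hω : ω ∈ omegaPred F n) :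
    dLog F c * ω ∈ omegaPow F n := by
  cases n with
  | zero => simp_all [omegaPred]
  | succ n => rw [omegaPow, pow_succ']; exact Submodule.mul_mem_mul ⟨_, rfl⟩ hω

end Forms

namespace DiffStr

variable {p : ℕ} {F : Type*} [Field F] (S : DiffStr p F)

theorem d_mem_omegaPow {n : ℕ} {v : DF F} (hv : v ∈ omegaPred F n) : S.d v ∈ omegaPow F n := by
  cases n with
  | zero => simp_all [omegaPred]
  | succ n => exact S.d_grade n v hv

theorem mapsTo_sp_omegaPred (n : ℕ) :
    Set.MapsTo S.sp (omegaPred F n) (omegaPred F n) := by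
  cases n with
  | zero => intro v hv; simp_all [omegaPred]
  | succ n => exact S.sp_grade n

theorem spIter_mem_omegaPow {n : ℕ} (t : ℕ) {ω : DF F} (hω : ω ∈ omegaPow F n) :
    spIter S t ω ∈ omegaPow F n :=
  Set.MapsTo.iterate (S.sp_grade n) t hω

theorem spIter_mem_omegaPred {n : ℕ} (t : ℕ) {v : DF F} (hv : v ∈ omegaPred F n) :
    spIter S t v ∈ omegaPred F n :=
  Set.MapsTo.iterate (S.mapsTo_sp_omegaPred n) t hv

theorem spIter_succ (t : ℕ) (ω : DF F) : spIter S (t + 1) ω = spIter S t (S.sp ω) :=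
  Function.iterate_succ_apply _ _ _

theorem spIter_succ' (t : ℕ) (ω : DF F) : spIter S (t + 1) ω = S.sp (spIter S t ω) :=
  Function.iterate_succ_apply' _ _ _

theorem spIter_add (t : ℕ) (ω ω' : DF F) :
    spIter S t (ω + ω') = spIter S t ω + spIter S t ω' :=
  iterate_map_add S.sp t ω ω'

theorem spIter_sub (t : ℕ) (ω ω' : DF F) :
    spIter S t (ω - ω') = spIter S t ω - spIter S t ω' :=
  iterate_map_sub S.sp t ω ω'

theorem dForm_mul_eq (c : F) (ω : DF F) : dForm F c * ω = S.d (c • ω) - c • S.d ω := by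
  rw [S.d_smul, add_sub_cancel_right]

theorem d_dForm_mul (c : F) (ω : DF F) : S.d (dForm F c * ω) = -(dForm F c * S.d ω) := by
  rw [S.dForm_mul_eq, map_sub, S.d_d, S.d_smul, S.d_d, smul_zero, add_zero, zero_sub]

theorem d_dLog_mul (c : F) (ω : DF F) : S.d (dLog F c * ω) = -(dLog F c * S.d ω) := by
  rcases eq_or_ne c 0 with rfl | hc
  · simp [dLog]
  have h : dLog F c * ω = dForm F c * (c⁻¹ • ω) := by
    rw [mul_smul_comm, dForm_eq_smul_dLog hc, smul_mul_assoc, smul_smul, inv_mul_cancel₀ hc,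
      one_smul]
  rw [h, d_dForm_mul, S.d_smul, mul_add, ← mul_assoc, dForm_mul_dForm_inv, zero_mul, zero_add,
    mul_smul_comm, dForm_eq_smul_dLog hc, smul_mul_assoc, smul_smul, inv_mul_cancel₀ hc, one_smul]

theorem d_pow_smul [CharP F p] (a : F) (ω : DF F) : S.d (a ^ p • ω) = a ^ p • S.d ω := by
  rw [S.d_smul, dForm_pow_eq_zero, zero_mul, zero_add]

theorem sp_smul [CharP F p] {n : ℕ} (a : F) {ω : DF F} (hω : ω ∈ omegaPow F n) :
    ∃ η ∈ omegaPred F n, S.sp (a • ω) = a ^ p • S.sp ω + S.d η := by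
  refine omegaPow_induction ?_ ?_ ?_ hω
  · exact ⟨0, zero_mem _, by simp⟩
  · rintro ω ω' ⟨η, hη, e⟩ ⟨η', hη', e'⟩
    refine ⟨η + η', add_mem hη hη', ?_⟩
    rw [smul_add, map_add, e, e', map_add, map_add, smul_add]
    abel
  · intro c x
    obtain ⟨η, hη, e⟩ := S.sp_log n (a * c) x
    obtain ⟨η', hη', e'⟩ := S.sp_log n c x
    refine ⟨η - a ^ p • η', sub_mem hη (Submodule.smul_mem _ _ hη'), ?_⟩
    rw [smul_smul, e, e', map_sub, S.d_pow_smul, mul_pow, mul_smul, smul_add]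
    abel

theorem sp_dLog_mul {n : ℕ} (c : F) {ω : DF F} (hω : ω ∈ omegaPred F n) :
    ∃ η ∈ omegaPred F n, S.sp (dLog F c * ω) = dLog F c * S.sp ω + S.d η := by
  obtain _ | n := n
  · simp_all [omegaPred]
  refine omegaPow_induction ?_ ?_ ?_ hω
  · exact ⟨0, zero_mem _, by simp⟩
  · rintro ω ω' ⟨η, hη, e⟩ ⟨η', hη', e'⟩
    refine ⟨η + η', add_mem hη hη', ?_⟩
    rw [mul_add, map_add, e, e', map_add, map_add, mul_add]
    abel
  · intro a x
    obtain ⟨η, hη, e⟩ := S.sp_log (n + 1) a (Fin.cons c x)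
    obtain ⟨η', hη', e'⟩ := S.sp_log n a x
    refine ⟨η + dLog F c * η', add_mem hη (dLog_mul_mem_omegaPow c hη'), ?_⟩
    rw [mul_smul_comm, dLog_mul_logForm, e, e', mul_add, mul_smul_comm, dLog_mul_logForm,
      map_add, d_dLog_mul]
    abel

/-- The error terms of the congruences `s_p^t(a ω) ≡ a^{p^t} s_p^t(ω)` and
`s_p^t(dc/c ∧ ω) ≡ dc/c ∧ s_p^t(ω)`. -/
def spIterExact (t n : ℕ) : AddSubgroup (DF F) :=
  AddSubgroup.closure {x | ∃ u < t, ∃ η ∈ omegaPred F n, x = spIter S u (S.d η)}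

theorem spIter_d_mem_spIterExact {u t n : ℕ} (hu : u < t) {η : DF F} (hη : η ∈ omegaPred F n) :
    spIter S u (S.d η) ∈ S.spIterExact t n :=
  AddSubgroup.subset_closure ⟨u, hu, η, hη, rfl⟩

theorem spIterExact_mono {t t' n : ℕ} (h : t ≤ t') : S.spIterExact t n ≤ S.spIterExact t' n :=
  AddSubgroup.closure_mono fun _ ⟨u, hu, η, hη, e⟩ => ⟨u, hu.trans_le h, η, hη, e⟩

theorem spIter_smul_sub_mem [CharP F p] {n : ℕ} (t : ℕ) (a : F) {ω : DF F}
    (hω : ω ∈ omegaPow F n) :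
    spIter S t (a • ω) - a ^ p ^ t • spIter S t ω ∈ S.spIterExact t n := by
  induction t generalizing a ω with
  | zero => simp [spIter]
  | succ t ih =>
    obtain ⟨η, hη, e⟩ := S.sp_smul a hω
    have h := ih (a ^ p) (S.sp_grade n ω hω)
    rw [← pow_mul, ← pow_succ'] at h
    rw [spIter_succ, spIter_succ, e, spIter_add]
    convert add_mem (S.spIterExact_mono t.le_succ h)
      (S.spIter_d_mem_spIterExact t.lt_succ_self hη) using 1
    abel

theorem spIter_dLog_mul_sub_mem {n : ℕ} (t : ℕ) (c : F) {ω : DF F} (hω : ω ∈ omegaPred F n) :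
    spIter S t (dLog F c * ω) - dLog F c * spIter S t ω ∈ S.spIterExact t n := by
  induction t generalizing ω with
  | zero => simp [spIter]
  | succ t ih =>
    obtain ⟨η, hη, e⟩ := S.sp_dLog_mul c hω
    have h := ih (S.mapsTo_sp_omegaPred n hω)
    rw [spIter_succ, spIter_succ, e, spIter_add]
    convert add_mem (S.spIterExact_mono t.le_succ h)
      (S.spIter_d_mem_spIterExact t.lt_succ_self hη) using 1
    abel

theorem pow_smul_spIter_d_eq [CharP F p] {n t N : ℕ} (hN : N + 1 = p ^ t) {Q : F} (hQ : Q ≠ 0)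
    {v : DF F} (hv : v ∈ omegaPred F n) :
    ∃ ρ ∈ S.spIterExact t n, ∃ ρ' ∈ S.spIterExact t n,
      Q ^ p ^ t • spIter S t (S.d v) = spIter S t (S.d (Q • v)) - Q ^ N • S.d (Q • spIter S t v)
        + Q ^ p ^ t • (S.d (spIter S t v) + ρ) + ρ' := by
  set W := spIter S t v
  have h₁ := S.spIter_smul_sub_mem t Q (S.d_mem_omegaPow hv)
  have h₂ := S.spIter_smul_sub_mem t Q (dLog_mul_mem_omegaPow Q hv)
  have h₃ := S.spIter_dLog_mul_sub_mem t Q hv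
  refine ⟨_, neg_mem h₃, _, neg_mem (add_mem h₁ h₂), ?_⟩
  have e₁ : Q • S.d v = S.d (Q • v) - Q • (dLog F Q * v) := by
    rw [← smul_mul_assoc, ← dForm_eq_smul_dLog hQ, S.dForm_mul_eq, sub_sub_cancel]
  have e₂ : Q ^ p ^ t • (dLog F Q * W) = Q ^ N • S.d (Q • W) - Q ^ p ^ t • S.d W := by
    rw [← hN, pow_succ, mul_smul, ← smul_mul_assoc, ← dForm_eq_smul_dLog hQ, S.dForm_mul_eq,
      smul_sub, smul_smul]
  rw [e₁, spIter_sub, smul_add, smul_neg, smul_sub, e₂]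
  abel

end DiffStr

section KGroup

variable {p : ℕ} {F : Type*} [Field F] (S : DiffStr p F) {r n : ℕ} (b : Fin r → F)
  (m : Fin r → ℕ)

theorem d_mem_hRel {z : DF F} (hz : z ∈ omegaPred F n) : S.d z ∈ hRel S n :=
  AddSubgroup.mem_sup_right ⟨z, hz, rfl⟩

theorem sp_sub_mem_hRel {ω : DF F} (hω : ω ∈ omegaPow F n) : S.sp ω - ω ∈ hRel S n :=
  AddSubgroup.mem_sup_left ⟨ω, hω, rfl⟩

theorem smul_sub_pow_smul_sp_mem_hRel [CharP F p] (c : F) {ω : DF F} (hω : ω ∈ omegaPow F n) :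
    c • ω - c ^ p • S.sp ω ∈ hRel S n := by
  obtain ⟨η, hη, e⟩ := S.sp_smul c hω
  have h := sub_mem (d_mem_hRel S hη) (sp_sub_mem_hRel S (Submodule.smul_mem _ c hω))
  rw [e] at h
  convert h using 1
  abel

theorem hRel_le_kGroup : hRel S n ≤ kGroup S b m n :=
  fun _ hx => AddSubgroup.subset_closure (Or.inl hx)

theorem kGens_subset_kGroup : kGens S b m n ⊆ kGroup S b m n :=
  fun _ hx => AddSubgroup.subset_closure (Or.inr hx)

variable {b} in
theorem smul_d_mem_kGroup {c : F} (hc : c ∈ Submonoid.closure (Set.range b)) {z : DF F}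
    (hz : z ∈ omegaPred F n) : c • S.d z ∈ kGroup S b m n := by
  induction hc using Submonoid.closure_induction generalizing z with
  | mem c hc =>
    obtain ⟨i, rfl⟩ := hc
    exact kGens_subset_kGroup S b m (Or.inl ⟨i, z, hz, rfl⟩)
  | one => simpa using hRel_le_kGroup S b m (d_mem_hRel S hz)
  | mul c₁ c₂ _ _ h₁ h₂ =>
    have e : (c₁ * c₂) • S.d z = c₂ • S.d (c₁ • z) + c₁ • S.d (c₂ • z) - S.d ((c₁ * c₂) • z) := by
      simp only [mul_smul]
      rw [S.d_smul c₁ (c₂ • z), S.d_smul c₁ z, mul_smul_comm]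
      module
    rw [e]
    exact sub_mem (add_mem (h₂ (Submodule.smul_mem _ c₁ hz)) (h₁ (Submodule.smul_mem _ c₂ hz)))
      (hRel_le_kGroup S b m (d_mem_hRel S (Submodule.smul_mem _ _ hz)))

theorem prod_pow_mem_closure (e : Fin r → ℕ) :
    ∏ j, b j ^ e j ∈ Submonoid.closure (Set.range b) :=
  Submonoid.prod_mem _ fun j _ =>
    Submonoid.pow_mem _ (Submonoid.subset_closure (Set.mem_range_self j)) _

end KGroup

/-- The condition `max{1, p^{t-mᵢ+1}} ∣ eᵢ` on the exponents of the generators of `K_F`: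
truncated subtraction makes `p ^ (t + 1 - m i)` equal to `max{1, p^{t-mᵢ+1}}`. -/
def AdmissibleExp (p : ℕ) {r : ℕ} (m : Fin r → ℕ) (t : ℕ) (e : Fin r → ℕ) : Prop :=
  ∀ j, p ^ (t + 1 - m j) ∣ e j

theorem AdmissibleExp.mono {p r : ℕ} {m : Fin r → ℕ} {t u : ℕ} {e : Fin r → ℕ}
    (he : AdmissibleExp p m t e) (h : u ≤ t) : AdmissibleExp p m u e :=
  fun j => (pow_dvd_pow p (by omega)).trans (he j)

/-- The generators of type (ii), with `t = 0` allowed and without the bounds `t < max m` and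
`eᵢ < p^t`. -/
def admForms {p : ℕ} {F : Type*} [Field F] (S : DiffStr p F) {r : ℕ} (b : Fin r → F)
    (m : Fin r → ℕ) (n : ℕ) : Set (DF F) :=
  { x | ∃ (t : ℕ) (e : Fin r → ℕ), AdmissibleExp p m t e ∧
      ∃ v ∈ omegaPred F n, x = (∏ j, b j ^ e j) • spIter S t (S.d v) }

section AdmForms

variable {p : ℕ} {F : Type*} [Field F] (S : DiffStr p F) {r n : ℕ} {b : Fin r → F}
  {m : Fin r → ℕ}

theorem smul_mem_kGroup_of_mem_spIterExact {t : ℕ}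
    (IH : ∀ u < t, ∀ e, AdmissibleExp p m u e → ∀ v ∈ omegaPred F n,
      (∏ j, b j ^ e j) • spIter S u (S.d v) ∈ kGroup S b m n)
    {e : Fin r → ℕ} (he : AdmissibleExp p m t e) {x : DF F} (hx : x ∈ S.spIterExact t n) :
    (∏ j, b j ^ e j) • x ∈ kGroup S b m n := by
  refine (AddSubgroup.closure_le (K := (kGroup S b m n).comap
    (DistribSMul.toAddMonoidHom (DF F) (∏ j, b j ^ e j)))).2 ?_ hx
  rintro _ ⟨u, hu, η, hη, rfl⟩
  exact IH u hu e (he.mono hu.le) η hη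

theorem prod_pow_mod_mul_prod_pow_div (K : ℕ) (e : Fin r → ℕ) :
    (∏ j, b j ^ (e j % K)) * (∏ j, b j ^ (e j / K)) ^ K = ∏ j, b j ^ e j := by
  rw [← Finset.prod_pow, ← Finset.prod_mul_distrib]
  exact Finset.prod_congr rfl fun j _ => by rw [← pow_mul, ← pow_add, Nat.mod_add_div']

theorem smul_spIter_d_mem_kGroup_of_lt_sup [CharP F p] (hp : p ≠ 0) (hb : ∀ i, b i ≠ 0)
    (hm : ∀ i, 1 ≤ m i) {t : ℕ} (ht : 0 < t) (htm : t < Finset.univ.sup m)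
    (IH : ∀ u < t, ∀ e, AdmissibleExp p m u e → ∀ v ∈ omegaPred F n,
      (∏ j, b j ^ e j) • spIter S u (S.d v) ∈ kGroup S b m n)
    {e : Fin r → ℕ} (he : AdmissibleExp p m t e) {v : DF F} (hv : v ∈ omegaPred F n) :
    (∏ j, b j ^ e j) • spIter S t (S.d v) ∈ kGroup S b m n := by
  set l : Fin r → ℕ := fun j => e j % p ^ t
  set L := ∏ j, b j ^ l j
  set Q := ∏ j, b j ^ (e j / p ^ t)
  have hl : AdmissibleExp p m t l := fun j =>
    (Nat.dvd_mod_iff (pow_dvd_pow p (by have := hm j; omega))).2 (he j)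
  have hQ : Q ≠ 0 := Finset.prod_ne_zero_iff.2 fun j _ => pow_ne_zero _ (hb j)
  obtain ⟨N, hN⟩ : ∃ N, N + 1 = p ^ t :=
    ⟨p ^ t - 1, Nat.sub_add_cancel (Nat.one_le_pow _ _ (by omega))⟩
  obtain ⟨ρ, hρ, ρ', hρ', h⟩ := S.pow_smul_spIter_d_eq hN hQ hv
  have hW := S.spIter_mem_omegaPred t hv
  have hLQ : L * Q ^ p ^ t = ∏ j, b j ^ e j := prod_pow_mod_mul_prod_pow_div (p ^ t) e
  have hclosure := prod_pow_mem_closure b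
  rw [← hLQ, mul_smul, h]
  simp only [smul_add, smul_sub, ← mul_smul]
  rw [hLQ]
  refine add_mem (add_mem (sub_mem ?_ ?_) (add_mem ?_ ?_)) ?_
  · exact kGens_subset_kGroup S b m
      (Or.inr ⟨t, l, ht, htm, fun j => ⟨Nat.mod_lt _ (by positivity), hl j⟩, _,
        Submodule.smul_mem _ Q hv, rfl⟩)
  · exact smul_d_mem_kGroup S m (mul_mem (hclosure l) (pow_mem (hclosure _) N))
      (Submodule.smul_mem _ Q hW)
  · exact smul_d_mem_kGroup S m (hclosure e) hW
  · exact smul_mem_kGroup_of_mem_spIterExact S IH he hρ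
  · exact smul_mem_kGroup_of_mem_spIterExact S IH hl hρ'

theorem smul_spIter_d_mem_kGroup_of_sup_le [CharP F p] {t : ℕ}
    (htm : Finset.univ.sup m ≤ t + 1)
    (IH : ∀ e, AdmissibleExp p m t e → ∀ v ∈ omegaPred F n,
      (∏ j, b j ^ e j) • spIter S t (S.d v) ∈ kGroup S b m n)
    {e : Fin r → ℕ} (he : AdmissibleExp p m (t + 1) e) {v : DF F} (hv : v ∈ omegaPred F n) :
    (∏ j, b j ^ e j) • spIter S (t + 1) (S.d v) ∈ kGroup S b m n := by
  have hmj : ∀ j, t + 1 + 1 - m j = t + 1 - m j + 1 := fun j => by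
    have := (Finset.le_sup (Finset.mem_univ j)).trans htm
    omega
  have hpe : ∀ j, p ∣ e j := fun j => (dvd_pow_self p (by rw [hmj]; omega)).trans (he j)
  have hf : AdmissibleExp p m t (fun j => e j / p) := fun j =>
    Nat.dvd_div_of_mul_dvd (by rw [← pow_succ', ← hmj]; exact he j)
  have hc : (∏ j, b j ^ (e j / p)) ^ p = ∏ j, b j ^ e j := by
    rw [← Finset.prod_pow]
    exact Finset.prod_congr rfl fun j _ => by rw [← pow_mul, Nat.div_mul_cancel (hpe j)]
  have hrel := smul_sub_pow_smul_sp_mem_hRel S (∏ j, b j ^ (e j / p))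
    (S.spIter_mem_omegaPow t (S.d_mem_omegaPow hv))
  rw [hc, ← S.spIter_succ'] at hrel
  simpa using sub_mem (IH _ hf v hv) (hRel_le_kGroup S b m hrel)

theorem smul_spIter_d_mem_kGroup [CharP F p] (hp : p ≠ 0) (hb : ∀ i, b i ≠ 0)
    (hm : ∀ i, 1 ≤ m i) (t : ℕ) (e : Fin r → ℕ) (he : AdmissibleExp p m t e) (v : DF F)
    (hv : v ∈ omegaPred F n) :
    (∏ j, b j ^ e j) • spIter S t (S.d v) ∈ kGroup S b m n := by
  induction t using Nat.strong_induction_on generalizing e v with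
  | _ t IH =>
  obtain _ | t := t
  · exact smul_d_mem_kGroup S m (prod_pow_mem_closure b e) hv
  by_cases htm : t + 1 < Finset.univ.sup m
  · exact smul_spIter_d_mem_kGroup_of_lt_sup S hp hb hm t.succ_pos htm IH he hv
  · exact smul_spIter_d_mem_kGroup_of_sup_le S (not_lt.1 htm) (IH t t.lt_succ_self) he hv

end AdmForms

section Update

variable {p r : ℕ} {m : Fin r → ℕ} {t : ℕ} {e : Fin r → ℕ} (i : Fin r)

theorem AdmissibleExp.update_mul
    (he : AdmissibleExp p (Function.update m i (m i + 1)) t e) :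
    AdmissibleExp p m t (Function.update e i (p * e i)) := by
  intro j
  rcases eq_or_ne j i with rfl | hj
  · have h := he j
    rw [Function.update_self] at h ⊢
    exact (pow_dvd_pow p (by omega)).trans
      (pow_succ' p (t + 1 - (m j + 1)) ▸ mul_dvd_mul_left p h)
  · simpa [Function.update_of_ne hj] using he j

theorem AdmissibleExp.update_succ (he : AdmissibleExp p m t e) :
    AdmissibleExp p (Function.update m i (m i + 1)) (t + 1)
      (Function.update (fun j => p * e j) i (e i)) := by
  intro j
  rcases eq_or_ne j i with rfl | hj
  · simpa [Function.update_self, show t + 1 + 1 - (m j + 1) = t + 1 - m j by omega] using he j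
  · rw [Function.update_of_ne hj, Function.update_of_ne hj]
    exact (pow_dvd_pow p (by omega)).trans
      (pow_succ' p (t + 1 - m j) ▸ mul_dvd_mul_left p (he j))

end Update

section KGroupEq

variable {p : ℕ} {F : Type*} [Field F] (S : DiffStr p F) {r n : ℕ} {b : Fin r → F}
  {m : Fin r → ℕ}

theorem kGens_subset_admForms (hm : ∀ i, 1 ≤ m i) : kGens S b m n ⊆ admForms S b m n := by
  rintro x (⟨i, z, hz, rfl⟩ | ⟨t, k, -, -, hk, v, hv, rfl⟩)
  · refine ⟨0, Pi.single i 1, fun j => ?_, z, hz, by simp [spIter, Pi.single_apply]⟩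
    rw [show 0 + 1 - m j = 0 by have := hm j; omega, pow_zero]
    exact one_dvd _
  · exact ⟨t, k, fun j => (hk j).2, v, hv, rfl⟩

theorem kGroup_eq_closure_admForms [CharP F p] (hp : p ≠ 0) (hb : ∀ i, b i ≠ 0)
    (hm : ∀ i, 1 ≤ m i) :
    kGroup S b m n = AddSubgroup.closure ((hRel S n : Set (DF F)) ∪ admForms S b m n) := by
  refine le_antisymm (AddSubgroup.closure_mono
    (Set.union_subset_union_right _ (kGens_subset_admForms S hm))) ?_
  rw [AddSubgroup.closure_le]
  rintro x (hx | ⟨t, e, he, v, hv, rfl⟩)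
  · exact hRel_le_kGroup S b m hx
  · exact smul_spIter_d_mem_kGroup S hp hb hm t e he v hv

variable (b) in
theorem prod_update_pow (i : Fin r) (k : Fin r → ℕ) :
    ∏ j, Function.update b i (b i ^ p) j ^ k j = ∏ j, b j ^ Function.update k i (p * k i) j := by
  refine Finset.prod_congr rfl fun j _ => ?_
  rcases eq_or_ne j i with rfl | hj
  · rw [Function.update_self, Function.update_self, pow_mul]
  · rw [Function.update_of_ne hj, Function.update_of_ne hj]

theorem admForms_update_subset (i : Fin r) :
    admForms S (Function.update b i (b i ^ p)) (Function.update m i (m i + 1)) n ⊆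
      admForms S b m n := by
  rintro _ ⟨t, k, hk, v, hv, rfl⟩
  exact ⟨t, _, hk.update_mul i, v, hv, by rw [prod_update_pow]⟩

theorem exists_admForms_update_sub_mem_hRel [CharP F p] (i : Fin r) {x : DF F}
    (hx : x ∈ admForms S b m n) :
    ∃ y ∈ admForms S (Function.update b i (b i ^ p)) (Function.update m i (m i + 1)) n,
      x - y ∈ hRel S n := by
  obtain ⟨t, e, he, v, hv, rfl⟩ := hx
  refine ⟨_, ⟨t + 1, _, he.update_succ i, v, hv, rfl⟩, ?_⟩
  have hprod : ∏ j, Function.update b i (b i ^ p) j ^ Function.update (fun j => p * e j) i (e i) j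
      = (∏ j, b j ^ e j) ^ p := by
    rw [prod_update_pow, Function.update_idem, Function.update_self, Function.update_eq_self,
      ← Finset.prod_pow]
    refine Finset.prod_congr rfl fun j _ => ?_
    rw [pow_mul']
  rw [hprod, S.spIter_succ']
  exact smul_sub_pow_smul_sp_mem_hRel S _ (S.spIter_mem_omegaPow t (S.d_mem_omegaPow hv))

theorem kGroup_update_pow [CharP F p] (hp : p ≠ 0) (hb : ∀ i, b i ≠ 0) (hm : ∀ i, 1 ≤ m i)
    (i : Fin r) :
    kGroup S (Function.update b i (b i ^ p)) (Function.update m i (m i + 1)) n =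
      kGroup S b m n := by
  have hb' : ∀ j, Function.update b i (b i ^ p) j ≠ 0 :=
    (Function.forall_update_iff b fun _ c => c ≠ 0).2 ⟨pow_ne_zero _ (hb i), fun j _ => hb j⟩
  have hm' : ∀ j, 1 ≤ Function.update m i (m i + 1) j :=
    (Function.forall_update_iff m fun _ k => 1 ≤ k).2 ⟨by omega, fun j _ => hm j⟩
  rw [kGroup_eq_closure_admForms S hp hb' hm', kGroup_eq_closure_admForms S hp hb hm]
  refine le_antisymm (AddSubgroup.closure_mono
    (Set.union_subset_union_right _ (admForms_update_subset S i))) ?_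
  rw [AddSubgroup.closure_le]
  rintro x (hx | hx)
  · exact AddSubgroup.subset_closure (Or.inl hx)
  · obtain ⟨y, hy, hxy⟩ := exists_admForms_update_sub_mem_hRel S i hx
    rw [← sub_add_cancel x y]
    exact add_mem (AddSubgroup.subset_closure (Or.inl hxy)) (AddSubgroup.subset_closure (Or.inr hy))

variable (b m) in
theorem kGens_comp_perm_subset (σ : Equiv.Perm (Fin r)) :
    kGens S (b ∘ σ) (m ∘ σ) n ⊆ kGens S b m n := by
  rintro x (⟨i, z, hz, rfl⟩ | ⟨t, k, ht, htm, hk, v, hv, rfl⟩)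
  · exact Or.inl ⟨σ i, z, hz, rfl⟩
  · refine Or.inr ⟨t, k ∘ σ.symm, ht, ?_, fun j => ?_, v, hv, ?_⟩
    · rwa [← Finset.sup_image, Finset.image_univ_of_surjective σ.surjective] at htm
    · simpa using hk (σ.symm j)
    · rw [← Equiv.prod_comp σ fun j => b j ^ (k ∘ σ.symm) j]
      simp

variable (b m) in
theorem kGroup_comp_perm (σ : Equiv.Perm (Fin r)) :
    kGroup S (b ∘ σ) (m ∘ σ) n = kGroup S b m n := by
  have h : kGens S b m n ⊆ kGens S (b ∘ σ) (m ∘ σ) n := by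
    simpa [Function.comp_assoc] using kGens_comp_perm_subset S (b ∘ σ) (m ∘ σ) σ.symm
  rw [kGroup, kGroup, (kGens_comp_perm_subset S b m σ).antisymm h]

end KGroupEq

/-- **Lemma 3.7 (377).** For `(b₁,m₁),…,(b_r,m_r) ∈ F^* × ℕ_{>0}`:
(i) `K_F` is invariant under permuting the pairs, and
(ii) replacing a pair `(bᵢ, mᵢ)` by `(bᵢ^p, mᵢ+1)` does not change `K_F`. -/
theorem kGroup_perm_and_pow
    (p : ℕ) (hp : p.Prime) (F : Type*) [Field F] [CharP F p]
    (S : DiffStr p F) (r : ℕ) (b : Fin r → F) (m : Fin r → ℕ)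
    (hb : ∀ i, b i ≠ 0) (hm : ∀ i, 1 ≤ m i) (n : ℕ) :
    (∀ σ : Equiv.Perm (Fin r), kGroup S (b ∘ σ) (m ∘ σ) n = kGroup S b m n) ∧
    (∀ i : Fin r,
      kGroup S (Function.update b i (b i ^ p)) (Function.update m i (m i + 1)) n
        = kGroup S b m n) :=
  ⟨kGroup_comp_perm S b m, kGroup_update_pow S hp.ne_zero hb hm⟩
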